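/- The limit as d → 1⁺ of H(d) = ∫_{arccosh(d)}^{∞} d/√(cosh²u − d²) du is +∞. -/

import Mathlib

open MeasureTheory Set Real Filter Topology

noncomputable def arccosh (x : ℝ) : ℝ := Real.log (x + Real.sqrt (x ^ 2 - 1))

noncomputable def H (d : ℝ) : ℝ :=
  ∫ u in Set.Ioi (arccosh d), d / Real.sqrt (Real.cosh u ^ 2 - d ^ 2)

/-!
Write `d = cosh a`. Since `cosh² u - cosh² a = sinh (u + a) * sinh (u - a)`, the integrand of
`H (cosh a)` is dominated on `(a, ∞)` by a multiple of `(u - a)^(-1/2) e^(-(u - a)/2)`, so it is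
integrable (which matters: otherwise the Bochner integral would be `0`). On `(a, 1]` it is at
least `1 / (2u)`, because `√(cosh² u - cosh² a) ≤ sinh u ≤ 2u`. Hence `H (cosh a) ≥ ½ log (1/a)`,
which tends to `∞` as `a = arcosh d → 0⁺`.
-/

theorem arccosh_eq_arcosh : arccosh = arcosh := rfl

lemma Real.cosh_sq_sub_cosh_sq (x y : ℝ) :
    cosh x ^ 2 - cosh y ^ 2 = sinh (x + y) * sinh (x - y) := by
  rw [sinh_add, sinh_sub]
  linear_combination (sinh y ^ 2 + 1) * cosh_sq x - (sinh x ^ 2 + 1) * cosh_sq y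

lemma Real.sinh_mul_exp_le_sinh_add (x : ℝ) {y : ℝ} (hy : 0 ≤ y) :
    sinh x * exp y ≤ sinh (x + y) := by
  rw [sinh_add, ← cosh_add_sinh y]
  nlinarith [sinh_lt_cosh (x := x), sinh_nonneg_iff.2 hy]

lemma Real.abs_sinh_le_two_mul_abs {x : ℝ} (hx : |x| ≤ 1) : |sinh x| ≤ 2 * |x| := by
  have h₁ := abs_exp_sub_one_le hx
  have h₂ := abs_exp_sub_one_le (x := -x) (by rwa [abs_neg])
  rw [abs_neg] at h₂
  rw [sinh_eq, abs_le] at *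
  constructor <;> linarith

noncomputable def integrandH (a u : ℝ) : ℝ := cosh a / √(cosh u ^ 2 - cosh a ^ 2)

lemma H_cosh {a : ℝ} (ha : 0 ≤ a) : H (cosh a) = ∫ u in Ioi a, integrandH a u := by
  rw [H, arccosh_eq_arcosh, arcosh_cosh ha]
  rfl

lemma integrandH_nonneg (a u : ℝ) : 0 ≤ integrandH a u := by
  unfold integrandH; positivity

lemma integrandH_le {a u : ℝ} (ha : 0 < a) (hu : a < u) :
    integrandH a u ≤ cosh a / √(sinh (2 * a)) *
      ((u - a) ^ (-(1 / 2) : ℝ) * exp (-(1 / 2) * (u - a) ^ (1 : ℝ))) := by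
  have hx : 0 < u - a := sub_pos.2 hu
  have hm : 0 < sinh (2 * a) * ((u - a) * exp (u - a)) := by
    have := sinh_pos_iff.2 (by positivity : 0 < 2 * a)
    positivity
  have hle : sinh (2 * a) * ((u - a) * exp (u - a)) ≤ cosh u ^ 2 - cosh a ^ 2 := by
    have h₁ : sinh (2 * a) * exp (u - a) ≤ sinh (u + a) := by
      convert sinh_mul_exp_le_sinh_add (2 * a) hx.le using 2; ring
    have h₂ : u - a ≤ sinh (u - a) := self_le_sinh_iff.2 hx.le
    rw [cosh_sq_sub_cosh_sq, mul_left_comm, mul_comm (u - a)]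
    gcongr
    exact sinh_nonneg_iff.2 (by linarith)
  have hmaj : (√((u - a) * exp (u - a)))⁻¹ =
      (u - a) ^ (-(1 / 2) : ℝ) * exp (-(1 / 2) * (u - a) ^ (1 : ℝ)) := by
    rw [rpow_one, rpow_neg hx.le, ← sqrt_eq_rpow, sqrt_mul hx.le, ← exp_half, mul_inv,
      ← exp_neg]
    ring_nf
  calc integrandH a u ≤ cosh a / √(sinh (2 * a) * ((u - a) * exp (u - a))) :=
        div_le_div_of_nonneg_left (cosh_pos a).le (sqrt_pos.2 hm) (sqrt_le_sqrt hle)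
    _ = _ := by
      rw [← hmaj, sqrt_mul (sinh_pos_iff.2 (by positivity)).le, ← div_div, div_eq_mul_inv]

lemma integrableOn_integrandH {a : ℝ} (ha : 0 < a) : IntegrableOn (integrandH a) (Ioi a) := by
  have hmaj : IntegrableOn (fun x : ℝ => x ^ (-(1 / 2) : ℝ) * exp (-(1 / 2) * x ^ (1 : ℝ)))
      (Ioi 0) :=
    integrableOn_rpow_mul_exp_neg_mul_rpow (by norm_num) one_pos (by norm_num)
  have hshift := ((measurePreserving_sub_right volume a).integrableOn_comp_preimage
    (measurableEmbedding_subRight a)).2 hmaj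
  rw [preimage_sub_const_Ioi, zero_add] at hshift
  refine (hshift.const_mul (cosh a / √(sinh (2 * a)))).mono' ?_ ?_
  · exact (by unfold integrandH; fun_prop : Measurable (integrandH a)).aestronglyMeasurable
  · filter_upwards [ae_restrict_mem measurableSet_Ioi] with u hu
    rw [norm_of_nonneg (integrandH_nonneg a u)]
    exact integrandH_le ha hu

lemma inv_two_mul_le_integrandH {a u : ℝ} (ha : 0 < a) (hau : a < u) (hu : u ≤ 1) :
    (2 * u)⁻¹ ≤ integrandH a u := by
  have hu₀ : 0 < u := ha.trans hau
  have hpos : 0 < cosh u ^ 2 - cosh a ^ 2 := by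
    rw [cosh_sq_sub_cosh_sq]
    exact mul_pos (sinh_pos_iff.2 (by linarith)) (sinh_pos_iff.2 (by linarith))
  have hsinh : sinh u ≤ 2 * u := by
    simpa [abs_of_pos hu₀, abs_of_pos (sinh_pos_iff.2 hu₀)] using
      abs_sinh_le_two_mul_abs (x := u) (by rwa [abs_of_pos hu₀])
  have hsqrt : √(cosh u ^ 2 - cosh a ^ 2) ≤ 2 * u := by
    rw [sqrt_le_left (by positivity)]
    nlinarith [cosh_sq u, one_le_cosh a, sinh_pos_iff.2 hu₀]
  calc (2 * u)⁻¹ ≤ (√(cosh u ^ 2 - cosh a ^ 2))⁻¹ := inv_anti₀ (sqrt_pos.2 hpos) hsqrt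
    _ ≤ integrandH a u := by
      rw [integrandH, div_eq_mul_inv]
      exact le_mul_of_one_le_left (by positivity) (one_le_cosh a)

lemma half_log_inv_le_H_cosh {a : ℝ} (ha₀ : 0 < a) (ha₁ : a < 1) :
    2⁻¹ * log a⁻¹ ≤ H (cosh a) := by
  have hcont : ContinuousOn (fun u : ℝ => (2 * u)⁻¹) (Icc a 1) :=
    (continuousOn_const.mul continuousOn_id).inv₀ fun u hu =>
      (mul_pos two_pos (ha₀.trans_le hu.1)).ne'
  calc 2⁻¹ * log a⁻¹ = ∫ u in Ioc a 1, (2 * u)⁻¹ := by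
        simp_rw [mul_inv]
        rw [← intervalIntegral.integral_of_le ha₁.le, intervalIntegral.integral_const_mul,
          integral_inv_of_pos ha₀ one_pos, one_div]
    _ ≤ ∫ u in Ioc a 1, integrandH a u :=
        setIntegral_mono_on (hcont.integrableOn_Icc.mono_set Ioc_subset_Icc_self)
          ((integrableOn_integrandH ha₀).mono_set Ioc_subset_Ioi_self) measurableSet_Ioc
          fun u hu => inv_two_mul_le_integrandH ha₀ hu.1 hu.2
    _ ≤ ∫ u in Ioi a, integrandH a u :=
        setIntegral_mono_set (integrableOn_integrandH ha₀)
          (Eventually.of_forall (integrandH_nonneg a)) Ioc_subset_Ioi_self.eventuallyLE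
    _ = H (cosh a) := (H_cosh ha₀.le).symm

lemma tendsto_H_cosh_nhdsGT_zero : Tendsto (fun a => H (cosh a)) (𝓝[>] 0) atTop := by
  have hlog : Tendsto (fun a : ℝ => 2⁻¹ * log a⁻¹) (𝓝[>] 0) atTop :=
    (tendsto_log_atTop.comp tendsto_inv_nhdsGT_zero).const_mul_atTop (by norm_num)
  refine tendsto_atTop_mono' _ ?_ hlog
  filter_upwards [Ioo_mem_nhdsGT one_pos] with a ha using half_log_inv_le_H_cosh ha.1 ha.2

lemma tendsto_arcosh_nhdsGT_one : Tendsto arcosh (𝓝[>] 1) (𝓝[>] 0) := by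
  refine tendsto_nhdsWithin_iff.2 ⟨?_, ?_⟩
  · have := (continuousOn_arcosh 1 self_mem_Ici).mono_left (nhdsWithin_mono _ Ioi_subset_Ici_self)
    rwa [arcosh_zero] at this
  · filter_upwards [self_mem_nhdsWithin] with d hd using arcosh_pos hd

/-- `H(d) → +∞` as `d → 1⁺`. -/
theorem stmt_3 : Tendsto H (𝓝[>] (1 : ℝ)) atTop := by
  refine (tendsto_H_cosh_nhdsGT_zero.comp tendsto_arcosh_nhdsGT_one).congr' ?_
  filter_upwards [self_mem_nhdsWithin] with d hd
  simp only [Function.comp_apply, cosh_arcosh (le_of_lt hd)]
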